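/- If Q is a key polynomial for ν, then the Q-truncation ν_Q is a valuation on K[x]; in particular ν_Q(fg) = ν_Q(f) + ν_Q(g) and ν_Q(f+g) ≥ min{ν_Q(f), ν_Q(g)} for all f, g ∈ K[x]. -/

import Mathlib

open Polynomial
open scoped Classical
noncomputable section

/-- `ν` is (the restriction to nonzero polynomials of) a valuation on `K[x]`,
nontrivial on `K`, with `ν(x) ≥ 0`.  Values are taken in a linearly ordered
field `Γ` (playing the role of the divisible hull of the value group). -/
structure IsVal {K : Type*} [Field K] {Γ : Type*} [Field Γ] [LinearOrder Γ] [IsStrictOrderedRing Γ]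
    (ν : Polynomial K → Γ) : Prop where
  map_mul : ∀ f g : Polynomial K, f ≠ 0 → g ≠ 0 → ν (f * g) = ν f + ν g
  map_add : ∀ f g : Polynomial K, f ≠ 0 → g ≠ 0 → f + g ≠ 0 →
    min (ν f) (ν g) ≤ ν (f + g)
  nontrivial : ∃ a : K, a ≠ 0 ∧ ν (C a) ≠ 0
  nonneg_x : 0 ≤ ν X

/-- `ε(f) = max_{b ≥ 1, ∂_b f ≠ 0} (ν(f) - ν(∂_b f))/b`, where `∂_b` is the
`b`-th formal (Hasse) derivative.  (Terms with `∂_b f = 0` correspond to the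
value `-∞` and are omitted from the maximum.) -/
noncomputable def eps {K : Type*} [Field K] {Γ : Type*} [Field Γ] [LinearOrder Γ] [IsStrictOrderedRing Γ]
    (ν : Polynomial K → Γ) (f : Polynomial K) : Γ :=
  if h : ((Finset.Icc 1 f.natDegree).filter
      fun b => Polynomial.hasseDeriv b f ≠ 0).Nonempty then
    ((Finset.Icc 1 f.natDegree).filter
      fun b => Polynomial.hasseDeriv b f ≠ 0).sup' h
      fun b => (ν f - ν (Polynomial.hasseDeriv b f)) / (b : Γ)
  else 0

/-- A monic (nonconstant) polynomial `Q` is a key polynomial for `ν` if every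
`f ∈ K[x]` with `ε(f) ≥ ε(Q)` satisfies `deg f ≥ deg Q`. -/
def IsKeyPol {K : Type*} [Field K] {Γ : Type*} [Field Γ] [LinearOrder Γ] [IsStrictOrderedRing Γ]
    (ν : Polynomial K → Γ) (Q : Polynomial K) : Prop :=
  Q.Monic ∧ 1 ≤ Q.natDegree ∧
    ∀ f : Polynomial K, 1 ≤ f.natDegree → eps ν Q ≤ eps ν f →
      Q.natDegree ≤ f.natDegree

/-- The `i`-th coefficient `f_i` of the `q`-standard expansion
`f = Σ f_i q^i` (each `f_i = 0` or `deg f_i < deg q`), for `q` monic. -/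
noncomputable def qCoeff {K : Type*} [Field K] (q f : Polynomial K) (i : ℕ) :
    Polynomial K :=
  (f /ₘ q ^ i) %ₘ q

/-- The `q`-truncation `ν_q(f) = min_i ν(f_i q^i)` of `ν`, the minimum taken
over the nonzero coefficients of the `q`-standard expansion of `f`. -/
noncomputable def truncVal {K : Type*} [Field K] {Γ : Type*}
    [Field Γ] [LinearOrder Γ] [IsStrictOrderedRing Γ] (ν : Polynomial K → Γ) (q f : Polynomial K) : Γ :=
  if h : ((Finset.range (f.natDegree + 1)).filter
      fun i => qCoeff q f i ≠ 0).Nonempty then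
    ((Finset.range (f.natDegree + 1)).filter
      fun i => qCoeff q f i ≠ 0).inf' h
      fun i => ν (qCoeff q f i * q ^ i)
  else 0

/-- `I(Q) = {b : (ν(Q) - ν(∂_b Q))/b = ε(Q)}`. -/
def Iset {K : Type*} [Field K] {Γ : Type*} [Field Γ] [LinearOrder Γ] [IsStrictOrderedRing Γ]
    (ν : Polynomial K → Γ) (Q : Polynomial K) : Set ℕ :=
  {b | 1 ≤ b ∧ Polynomial.hasseDeriv b Q ≠ 0 ∧
    (ν Q - ν (Polynomial.hasseDeriv b Q)) / (b : Γ) = eps ν Q}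

/-- `S_Q(f) = {i : ν(f_i Q^i) = ν_Q(f)}` (over nonzero coefficients). -/
def Sset {K : Type*} [Field K] {Γ : Type*} [Field Γ] [LinearOrder Γ] [IsStrictOrderedRing Γ]
    (ν : Polynomial K → Γ) (q f : Polynomial K) : Set ℕ :=
  {i | qCoeff q f i ≠ 0 ∧ ν (qCoeff q f i * q ^ i) = truncVal ν q f}


/-!
For `f, g` of degree `< deg Q` write `f g = r + Q c` with `deg r, deg c < deg Q`. Every
nonconstant `h` of degree `< deg Q` has `ε(h) < ε(Q)`, so `ν(∂_b h) > ν(h) - b ε(Q)` for `b ≥ 1`;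
by the Leibniz rule also `ν(∂_b(f g)) > ν(f g) - b ε(Q)`. Suppose `ν(Q c) ≤ ν(f g)`, hence
`ν(Q c) ≤ ν(r)`. For `b ∈ I(Q)` the term `∂_b Q · c` dominates the Leibniz expansion of
`∂_b(Q c)`, and `∂_b r` has larger value still, so `ν(∂_b(f g)) = ν(Q c) - b ε(Q) ≤ ν(f g) - b ε(Q)`,
a contradiction. Hence `ν(Q c) > ν(f g) = ν(r)`: on such products `ν_Q` agrees with `ν` and is
attained only at index `0`.

For general `f = Σ f_i Q^i`, `g = Σ g_j Q^j`, every `Q`-coefficient of `f g` is a sum of the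
coefficients of the products `f_i Q^i · g_j Q^j`, which by the above have value
`≥ ν(f_i Q^i) + ν(g_j Q^j)`, with equality only at index `i + j`. Taking `i₀, j₀` least in `S_Q(f)`
and `S_Q(g)`, the pair `(i₀, j₀)` is the only strictly dominant contribution at index `i₀ + j₀`.
The ultrametric inequality holds because the `Q`-expansion is additive.
-/

namespace Polynomial

variable {R : Type*} [CommRing R]

theorem divByMonic_add {q : R[X]} (hq : q.Monic) (f g : R[X]) :
    (f + g) /ₘ q = f /ₘ q + g /ₘ q := by
  nontriviality R
  refine (div_modByMonic_unique _ (f %ₘ q + g %ₘ q) hq ⟨?_, ?_⟩).1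
  · linear_combination modByMonic_add_div f q + modByMonic_add_div g q
  · exact (degree_add_le _ _).trans_lt
      (max_lt (degree_modByMonic_lt _ hq) (degree_modByMonic_lt _ hq))

theorem divByMonic_mul {p q : R[X]} (hp : p.Monic) (hq : q.Monic) (f : R[X]) :
    f /ₘ (p * q) = f /ₘ p /ₘ q := by
  nontriviality R
  refine (div_modByMonic_unique _ (f %ₘ p + p * (f /ₘ p %ₘ q)) (hp.mul hq) ⟨?_, ?_⟩).1
  · linear_combination p * modByMonic_add_div (f /ₘ p) q + modByMonic_add_div f p
  · rw [hq.degree_mul]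
    refine (degree_add_le _ _).trans_lt (max_lt ?_ ?_)
    · exact (degree_modByMonic_lt f hp).trans_le
        (le_add_of_nonneg_right (zero_le_degree_iff.mpr hq.ne_zero))
    · rw [mul_comm p, hp.degree_mul, add_comm p.degree]
      exact WithBot.add_lt_add_right (degree_ne_bot.mpr hp.ne_zero) (degree_modByMonic_lt _ hq)

theorem le_natDegree_of_hasseDeriv_ne_zero {f : R[X]} {b : ℕ} (h : hasseDeriv b f ≠ 0) :
    b ≤ f.natDegree :=
  not_lt.mp fun hlt => h (hasseDeriv_eq_zero_of_lt_natDegree f b hlt)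

theorem natDegree_mul_divByMonic_lt {f g q : R[X]} (hq : q.Monic)
    (hfq : f.natDegree < q.natDegree) (hgq : g.natDegree < q.natDegree) :
    (f * g /ₘ q).natDegree < q.natDegree := by
  rw [natDegree_divByMonic _ hq]
  have := natDegree_mul_le (p := f) (q := g)
  omega

end Polynomial

section QExpansion

variable {K : Type*} [Field K] {Q : K[X]}

@[simp]
theorem qCoeff_zero_left (i : ℕ) : qCoeff Q 0 i = 0 := by
  simp [qCoeff]

theorem qCoeff_zero (f : K[X]) : qCoeff Q f 0 = f %ₘ Q := by
  rw [qCoeff, pow_zero, divByMonic_one]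

theorem qCoeff_succ (hQ : Q.Monic) (f : K[X]) (i : ℕ) :
    qCoeff Q f (i + 1) = qCoeff Q (f /ₘ Q) i := by
  rw [qCoeff, qCoeff, pow_succ', divByMonic_mul hQ (hQ.pow i)]

theorem qCoeff_add (hQ : Q.Monic) (f g : K[X]) (i : ℕ) :
    qCoeff Q (f + g) i = qCoeff Q f i + qCoeff Q g i := by
  rw [qCoeff, qCoeff, qCoeff, divByMonic_add (hQ.pow i), add_modByMonic]

theorem qCoeff_sum (hQ : Q.Monic) {ι : Type*} (s : Finset ι) (F : ι → K[X]) (i : ℕ) :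
    qCoeff Q (∑ j ∈ s, F j) i = ∑ j ∈ s, qCoeff Q (F j) i :=
  map_sum (AddMonoidHom.mk' (fun f => qCoeff Q f i) fun f g => qCoeff_add hQ f g i) F s

theorem natDegree_qCoeff_lt (hQ : Q.Monic) (hQd : 1 ≤ Q.natDegree) (f : K[X]) (i : ℕ) :
    (qCoeff Q f i).natDegree < Q.natDegree :=
  natDegree_modByMonic_lt _ hQ fun h => by simp [h] at hQd

theorem qCoeff_mul_pow_of_degree_lt (hQ : Q.Monic) {p : K[X]} (hp : p.degree < Q.degree)
    (n k : ℕ) : qCoeff Q (p * Q ^ n) k = if k = n then p else 0 := by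
  induction n generalizing k with
  | zero =>
    cases k with
    | zero => rw [pow_zero, mul_one, qCoeff_zero, (modByMonic_eq_self_iff hQ).mpr hp, if_pos rfl]
    | succ k =>
      rw [pow_zero, mul_one, qCoeff_succ hQ, (divByMonic_eq_zero_iff hQ).mpr hp,
        qCoeff_zero_left, if_neg k.succ_ne_zero]
  | succ n ih =>
    cases k with
    | zero =>
      rw [qCoeff_zero, (modByMonic_eq_zero_iff_dvd hQ).mpr ⟨p * Q ^ n, by ring⟩,
        if_neg (n.succ_ne_zero).symm]
    | succ k =>
      rw [qCoeff_succ hQ, pow_succ', mul_left_comm, mul_divByMonic_cancel_left _ hQ, ih]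
      simp

theorem qCoeff_mul_pow (hQ : Q.Monic) {p : K[X]} (hp : (p /ₘ Q).degree < Q.degree) (n k : ℕ) :
    qCoeff Q (p * Q ^ n) k = if k = n then p %ₘ Q else if k = n + 1 then p /ₘ Q else 0 := by
  have hsplit : p * Q ^ n = p %ₘ Q * Q ^ n + p /ₘ Q * Q ^ (n + 1) := by
    linear_combination (-Q ^ n) * modByMonic_add_div p Q
  rw [hsplit, qCoeff_add hQ, qCoeff_mul_pow_of_degree_lt hQ (degree_modByMonic_lt p hQ),
    qCoeff_mul_pow_of_degree_lt hQ hp]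
  split_ifs <;> first | omega | simp

theorem divByMonic_pow_eq_zero (hQ : Q.Monic) (hQd : 1 ≤ Q.natDegree) {f : K[X]} {N : ℕ}
    (h : f.natDegree < N) : f /ₘ Q ^ N = 0 := by
  rcases eq_or_ne f 0 with rfl | hf
  · exact zero_divByMonic _
  rw [divByMonic_eq_zero_iff (hQ.pow N)]
  refine degree_lt_degree (h.trans_le ?_)
  rw [natDegree_pow]
  exact Nat.le_mul_of_pos_right N hQd

theorem qCoeff_eq_zero_of_natDegree_lt (hQ : Q.Monic) (hQd : 1 ≤ Q.natDegree) {f : K[X]}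
    {i : ℕ} (h : f.natDegree < i) : qCoeff Q f i = 0 := by
  rw [qCoeff, divByMonic_pow_eq_zero hQ hQd h, zero_modByMonic]

theorem le_natDegree_of_qCoeff_ne_zero (hQ : Q.Monic) (hQd : 1 ≤ Q.natDegree) {f : K[X]}
    {i : ℕ} (h : qCoeff Q f i ≠ 0) : i ≤ f.natDegree :=
  not_lt.mp fun hlt => h (qCoeff_eq_zero_of_natDegree_lt hQ hQd hlt)

theorem sum_qCoeff_mul_pow_of_divByMonic_eq_zero (hQ : Q.Monic) {N : ℕ} {f : K[X]}
    (h : f /ₘ Q ^ N = 0) : ∑ i ∈ Finset.range N, qCoeff Q f i * Q ^ i = f := by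
  induction N generalizing f with
  | zero => simpa using h.symm
  | succ n ih =>
    rw [pow_succ', divByMonic_mul hQ (hQ.pow n)] at h
    rw [Finset.sum_range_succ', pow_zero, mul_one, qCoeff_zero]
    simp_rw [qCoeff_succ hQ, pow_succ, ← mul_assoc, ← Finset.sum_mul, ih h]
    linear_combination modByMonic_add_div f Q

theorem sum_qCoeff_mul_pow (hQ : Q.Monic) (hQd : 1 ≤ Q.natDegree) (f : K[X]) :
    ∑ i ∈ Finset.range (f.natDegree + 1), qCoeff Q f i * Q ^ i = f :=
  sum_qCoeff_mul_pow_of_divByMonic_eq_zero hQ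
    (divByMonic_pow_eq_zero hQ hQd f.natDegree.lt_succ_self)

end QExpansion

namespace IsVal

variable {K : Type*} [Field K] {Γ : Type*} [Field Γ] [LinearOrder Γ] [IsStrictOrderedRing Γ]
  {ν : K[X] → Γ} {p q : K[X]} {c : Γ}

theorem map_one (hν : IsVal ν) : ν 1 = 0 := by
  simpa using hν.map_mul 1 1 one_ne_zero one_ne_zero

theorem map_neg (hν : IsVal ν) (p : K[X]) : ν (-p) = ν p := by
  rcases eq_or_ne p 0 with rfl | hp
  · rw [neg_zero]
  have hm : (-1 : K[X]) ≠ 0 := neg_ne_zero.mpr one_ne_zero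
  have h2 : ν (-1 : K[X]) + ν (-1) = 0 := by
    rw [← hν.map_mul _ _ hm hm, neg_one_mul, neg_neg, hν.map_one]
  rw [← neg_one_mul, hν.map_mul _ _ hm hp]
  linarith

theorem map_pow (hν : IsVal ν) (hq : q ≠ 0) (n : ℕ) : ν (q ^ n) = n * ν q := by
  induction n with
  | zero => simp [hν.map_one]
  | succ n ih =>
    rw [pow_succ, hν.map_mul _ _ (pow_ne_zero _ hq) hq, ih]
    push_cast
    ring

theorem map_mul_pow (hν : IsVal ν) (hp : p ≠ 0) (hq : q ≠ 0) (n : ℕ) :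
    ν (p * q ^ n) = ν p + n * ν q := by
  rw [hν.map_mul _ _ hp (pow_ne_zero _ hq), hν.map_pow hq]

theorem le_map_add (hν : IsVal ν) (hp : p ≠ 0 → c ≤ ν p) (hq : q ≠ 0 → c ≤ ν q)
    (hpq : p + q ≠ 0) : c ≤ ν (p + q) := by
  rcases eq_or_ne p 0 with rfl | hp0
  · rw [zero_add] at hpq ⊢
    exact hq hpq
  rcases eq_or_ne q 0 with rfl | hq0
  · rw [add_zero] at hpq ⊢
    exact hp hp0
  exact (le_min (hp hp0) (hq hq0)).trans (hν.map_add p q hp0 hq0 hpq)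

theorem lt_map_add (hν : IsVal ν) (hp : p ≠ 0 → c < ν p) (hq : q ≠ 0 → c < ν q)
    (hpq : p + q ≠ 0) : c < ν (p + q) := by
  rcases eq_or_ne p 0 with rfl | hp0
  · rw [zero_add] at hpq ⊢
    exact hq hpq
  rcases eq_or_ne q 0 with rfl | hq0
  · rw [add_zero] at hpq ⊢
    exact hp hp0
  exact (lt_min (hp hp0) (hq hq0)).trans_le (hν.map_add p q hp0 hq0 hpq)

theorem map_add_eq_of_lt (hν : IsVal ν) (hp : p ≠ 0) (hq : q ≠ 0 → ν p < ν q) :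
    p + q ≠ 0 ∧ ν (p + q) = ν p := by
  have hpq : p + q ≠ 0 := by
    intro h
    have hq0 : q ≠ 0 := by
      rintro rfl
      exact hp (by simpa using h)
    have := hq hq0
    rw [eq_neg_of_add_eq_zero_left h, hν.map_neg] at this
    exact this.false
  refine ⟨hpq, le_antisymm ?_ (hν.le_map_add (fun _ => le_rfl) (fun h => (hq h).le) hpq)⟩
  by_contra! hlt
  have : ν p < ν (p + q + -q) :=
    hν.lt_map_add (fun _ => hlt) (fun h => hν.map_neg q ▸ hq (neg_ne_zero.mp h)) (by simpa)
  simp at this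

theorem le_map_sum (hν : IsVal ν) {ι : Type*} {s : Finset ι} {F : ι → K[X]}
    (h : ∀ i ∈ s, F i ≠ 0 → c ≤ ν (F i)) (hs : ∑ i ∈ s, F i ≠ 0) :
    c ≤ ν (∑ i ∈ s, F i) := by
  induction s using Finset.cons_induction with
  | empty => simp at hs
  | cons a s ha ih =>
    rw [Finset.sum_cons] at hs ⊢
    exact hν.le_map_add (h a (Finset.mem_cons_self a s))
      (ih fun i hi => h i (Finset.mem_cons_of_mem hi)) hs

theorem lt_map_sum (hν : IsVal ν) {ι : Type*} {s : Finset ι} {F : ι → K[X]}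
    (h : ∀ i ∈ s, F i ≠ 0 → c < ν (F i)) (hs : ∑ i ∈ s, F i ≠ 0) :
    c < ν (∑ i ∈ s, F i) := by
  induction s using Finset.cons_induction with
  | empty => simp at hs
  | cons a s ha ih =>
    rw [Finset.sum_cons] at hs ⊢
    exact hν.lt_map_add (h a (Finset.mem_cons_self a s))
      (ih fun i hi => h i (Finset.mem_cons_of_mem hi)) hs

theorem map_sum_eq_of_lt (hν : IsVal ν) {ι : Type*} {s : Finset ι}
    {F : ι → K[X]} {i₀ : ι} (hi₀ : i₀ ∈ s) (hF : F i₀ ≠ 0)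
    (h : ∀ i ∈ s, i ≠ i₀ → F i ≠ 0 → ν (F i₀) < ν (F i)) :
    ∑ i ∈ s, F i ≠ 0 ∧ ν (∑ i ∈ s, F i) = ν (F i₀) := by
  rw [← Finset.add_sum_erase s F hi₀]
  exact hν.map_add_eq_of_lt hF fun hs => hν.lt_map_sum
    (fun i hi => h i (Finset.mem_of_mem_erase hi) (Finset.ne_of_mem_erase hi)) hs

end IsVal

section Eps

variable {K : Type*} [Field K] {Γ : Type*} [Field Γ] [LinearOrder Γ] [IsStrictOrderedRing Γ]
  {ν : K[X] → Γ} {f : K[X]}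

theorem sub_mul_eps_le_map_hasseDeriv {b : ℕ} (h : hasseDeriv b f ≠ 0) :
    ν f - b * eps ν f ≤ ν (hasseDeriv b f) := by
  rcases Nat.eq_zero_or_pos b with rfl | hb
  · simp
  have hmem : b ∈ (Finset.Icc 1 f.natDegree).filter fun b => hasseDeriv b f ≠ 0 :=
    Finset.mem_filter.mpr ⟨Finset.mem_Icc.mpr ⟨hb, le_natDegree_of_hasseDeriv_ne_zero h⟩, h⟩
  have hle : (ν f - ν (hasseDeriv b f)) / b ≤ eps ν f := by
    rw [eps, dif_pos ⟨b, hmem⟩]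
    exact Finset.le_sup' (fun b => (ν f - ν (hasseDeriv b f)) / (b : Γ)) hmem
  rw [div_le_iff₀ (Nat.cast_pos.mpr hb)] at hle
  linarith

theorem Iset_nonempty (hf : 1 ≤ f.natDegree) : (Iset ν f).Nonempty := by
  have hne : ((Finset.Icc 1 f.natDegree).filter fun b => hasseDeriv b f ≠ 0).Nonempty := by
    refine ⟨f.natDegree, Finset.mem_filter.mpr ⟨Finset.mem_Icc.mpr ⟨hf, le_rfl⟩, ?_⟩⟩
    rw [hasseDeriv_natDegree_eq_C, C_ne_zero, leadingCoeff_ne_zero]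
    rintro rfl
    simp at hf
  obtain ⟨b, hbmem, hbeq⟩ := Finset.exists_mem_eq_sup' hne
    fun b => (ν f - ν (hasseDeriv b f)) / (b : Γ)
  simp only [Finset.mem_filter, Finset.mem_Icc] at hbmem
  exact ⟨b, hbmem.1.1, hbmem.2, by rw [eps, dif_pos hne, hbeq]⟩

theorem map_hasseDeriv_of_mem_Iset {b : ℕ} (hb : b ∈ Iset ν f) :
    ν (hasseDeriv b f) = ν f - b * eps ν f := by
  obtain ⟨hb1, -, heq⟩ := hb
  rw [div_eq_iff (Nat.cast_pos.mpr hb1).ne'] at heq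
  linarith

end Eps

namespace IsKeyPol

variable {K : Type*} [Field K] {Γ : Type*} [Field Γ] [LinearOrder Γ] [IsStrictOrderedRing Γ]
  {ν : K[X] → Γ} {Q f g : K[X]}

theorem eps_lt (hQ : IsKeyPol ν Q) (hf : 1 ≤ f.natDegree) (hfQ : f.natDegree < Q.natDegree) :
    eps ν f < eps ν Q :=
  lt_of_not_ge fun h => (hQ.2.2 f hf h).not_gt hfQ

theorem sub_mul_eps_lt_map_hasseDeriv (hQ : IsKeyPol ν Q) (hfQ : f.natDegree < Q.natDegree)
    {b : ℕ} (hb : 1 ≤ b) (h : hasseDeriv b f ≠ 0) :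
    ν f - b * eps ν Q < ν (hasseDeriv b f) := by
  have hf : 1 ≤ f.natDegree := hb.trans (le_natDegree_of_hasseDeriv_ne_zero h)
  have : (b : Γ) * eps ν f < b * eps ν Q :=
    mul_lt_mul_of_pos_left (hQ.eps_lt hf hfQ) (Nat.cast_pos.mpr hb)
  linarith [sub_mul_eps_le_map_hasseDeriv (ν := ν) h]

theorem sub_mul_eps_le_map_hasseDeriv (hQ : IsKeyPol ν Q) (hfQ : f.natDegree < Q.natDegree)
    (b : ℕ) (h : hasseDeriv b f ≠ 0) : ν f - b * eps ν Q ≤ ν (hasseDeriv b f) := by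
  rcases Nat.eq_zero_or_pos b with rfl | hb
  · simp
  · exact (hQ.sub_mul_eps_lt_map_hasseDeriv hfQ hb h).le

theorem sub_mul_eps_lt_map_hasseDeriv_mul (hν : IsVal ν) (hQ : IsKeyPol ν Q)
    (hfQ : f.natDegree < Q.natDegree) (hgQ : g.natDegree < Q.natDegree) {b : ℕ} (hb : 1 ≤ b)
    (h : hasseDeriv b (f * g) ≠ 0) :
    ν f + ν g - b * eps ν Q < ν (hasseDeriv b (f * g)) := by
  rw [hasseDeriv_mul] at h ⊢
  refine hν.lt_map_sum (fun p hp hne => ?_) h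
  obtain ⟨hf, hg⟩ := mul_ne_zero_iff.mp hne
  have hp : p.1 + p.2 = b := Finset.HasAntidiagonal.mem_antidiagonal.mp hp
  rw [hν.map_mul _ _ hf hg, ← hp, Nat.cast_add]
  rcases Nat.eq_zero_or_pos p.1 with h1 | h1
  · linarith [hQ.sub_mul_eps_le_map_hasseDeriv hfQ p.1 hf,
      hQ.sub_mul_eps_lt_map_hasseDeriv hgQ (by omega) hg]
  · linarith [hQ.sub_mul_eps_lt_map_hasseDeriv hfQ h1 hf,
      hQ.sub_mul_eps_le_map_hasseDeriv hgQ p.2 hg]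

theorem map_hasseDeriv_mul_of_mem_Iset (hν : IsVal ν) (hQ : IsKeyPol ν Q) {c : K[X]}
    (hc : c ≠ 0) (hcQ : c.natDegree < Q.natDegree) {b : ℕ} (hb : b ∈ Iset ν Q) :
    hasseDeriv b (Q * c) ≠ 0 ∧ ν (hasseDeriv b (Q * c)) = ν (Q * c) - b * eps ν Q := by
  have hbQ : hasseDeriv b Q * hasseDeriv 0 c ≠ 0 := by
    rw [hasseDeriv_zero']
    exact mul_ne_zero hb.2.1 hc
  have hbv : ν (hasseDeriv b Q * hasseDeriv 0 c) = ν (Q * c) - b * eps ν Q := by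
    rw [hasseDeriv_zero', hν.map_mul _ _ hb.2.1 hc, hν.map_mul _ _ hQ.1.ne_zero hc,
      map_hasseDeriv_of_mem_Iset hb]
    ring
  rw [hasseDeriv_mul, ← hbv]
  refine hν.map_sum_eq_of_lt (i₀ := (b, 0))
    (Finset.HasAntidiagonal.mem_antidiagonal.mpr (add_zero b)) hbQ fun p hp hpb hne => ?_
  obtain ⟨h1, h2⟩ := mul_ne_zero_iff.mp hne
  have hp : p.1 + p.2 = b := Finset.HasAntidiagonal.mem_antidiagonal.mp hp
  have hp2 : 1 ≤ p.2 := Nat.one_le_iff_ne_zero.mpr fun h0 => hpb (Prod.ext (by omega) h0)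
  rw [hbv, hν.map_mul _ _ h1 h2, hν.map_mul _ _ hQ.1.ne_zero hc, ← hp, Nat.cast_add]
  linarith [_root_.sub_mul_eps_le_map_hasseDeriv (ν := ν) h1,
    hQ.sub_mul_eps_lt_map_hasseDeriv hcQ hp2 h2]

theorem map_mul_lt_map_mul_divByMonic (hν : IsVal ν) (hQ : IsKeyPol ν Q) (hf : f ≠ 0)
    (hg : g ≠ 0) (hfQ : f.natDegree < Q.natDegree) (hgQ : g.natDegree < Q.natDegree)
    (hc : f * g /ₘ Q ≠ 0) : ν (f * g) < ν (Q * (f * g /ₘ Q)) := by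
  set c := f * g /ₘ Q
  set r := f * g %ₘ Q
  have hcQ : c.natDegree < Q.natDegree := natDegree_mul_divByMonic_lt hQ.1 hfQ hgQ
  have hrQ : r.natDegree < Q.natDegree :=
    natDegree_modByMonic_lt _ hQ.1 fun h => by simp [h] at hfQ
  have hsplit : f * g = Q * c + r := by rw [add_comm]; exact (modByMonic_add_div _ _).symm
  by_contra! hle
  have hr : r ≠ 0 → ν (Q * c) ≤ ν r := fun hr0 => by
    by_contra! hlt
    have := (hν.map_add_eq_of_lt hr0 fun _ => hlt).2
    rw [add_comm, ← hsplit] at this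
    linarith
  obtain ⟨b, hb⟩ := Iset_nonempty (ν := ν) hQ.2.1
  obtain ⟨hQc, hQcv⟩ := hQ.map_hasseDeriv_mul_of_mem_Iset hν hc hcQ hb
  have hrb : hasseDeriv b r ≠ 0 → ν (hasseDeriv b (Q * c)) < ν (hasseDeriv b r) := fun h => by
    have hr0 : r ≠ 0 := by rintro hr0; simp [hr0] at h
    linarith [hQ.sub_mul_eps_lt_map_hasseDeriv hrQ hb.1 h, hr hr0]
  obtain ⟨hne, hv⟩ := hν.map_add_eq_of_lt hQc hrb
  rw [← map_add, ← hsplit] at hne hv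
  linarith [hQ.sub_mul_eps_lt_map_hasseDeriv_mul hν hfQ hgQ hb.1 hne, hν.map_mul f g hf hg]

theorem map_modByMonic_mul (hν : IsVal ν) (hQ : IsKeyPol ν Q) (hf : f ≠ 0) (hg : g ≠ 0)
    (hfQ : f.natDegree < Q.natDegree) (hgQ : g.natDegree < Q.natDegree) :
    f * g %ₘ Q ≠ 0 ∧ ν (f * g %ₘ Q) = ν (f * g) := by
  have hr : f * g %ₘ Q = f * g + -(Q * (f * g /ₘ Q)) := by
    linear_combination modByMonic_add_div (f * g) Q
  rw [hr]
  refine hν.map_add_eq_of_lt (mul_ne_zero hf hg) fun h => ?_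
  rw [hν.map_neg]
  exact hQ.map_mul_lt_map_mul_divByMonic hν hf hg hfQ hgQ fun hc => by simp [hc] at h

theorem map_qCoeff_mul_pow_mul_mul_pow_add (hν : IsVal ν) (hQ : IsKeyPol ν Q) (hf : f ≠ 0)
    (hg : g ≠ 0) (hfQ : f.natDegree < Q.natDegree) (hgQ : g.natDegree < Q.natDegree) (a b : ℕ) :
    qCoeff Q (f * Q ^ a * (g * Q ^ b)) (a + b) * Q ^ (a + b) ≠ 0 ∧
      ν (qCoeff Q (f * Q ^ a * (g * Q ^ b)) (a + b) * Q ^ (a + b)) =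
        ν (f * Q ^ a) + ν (g * Q ^ b) := by
  have hQ0 := hQ.1.ne_zero
  obtain ⟨hr, hrv⟩ := hQ.map_modByMonic_mul hν hf hg hfQ hgQ
  rw [show f * Q ^ a * (g * Q ^ b) = f * g * Q ^ (a + b) by ring,
    qCoeff_mul_pow hQ.1 (degree_lt_degree (natDegree_mul_divByMonic_lt hQ.1 hfQ hgQ)),
    if_pos rfl, hν.map_mul_pow hr hQ0, hν.map_mul_pow hf hQ0, hν.map_mul_pow hg hQ0, hrv,
    hν.map_mul f g hf hg]
  exact ⟨mul_ne_zero hr (pow_ne_zero _ hQ0), by push_cast; ring⟩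

theorem lt_map_qCoeff_mul_pow_mul_mul_pow (hν : IsVal ν) (hQ : IsKeyPol ν Q) (hf : f ≠ 0)
    (hg : g ≠ 0) (hfQ : f.natDegree < Q.natDegree) (hgQ : g.natDegree < Q.natDegree)
    {a b k : ℕ} (hk : k ≠ a + b) (h : qCoeff Q (f * Q ^ a * (g * Q ^ b)) k ≠ 0) :
    ν (f * Q ^ a) + ν (g * Q ^ b) < ν (qCoeff Q (f * Q ^ a * (g * Q ^ b)) k * Q ^ k) := by
  have hQ0 := hQ.1.ne_zero
  rw [show f * Q ^ a * (g * Q ^ b) = f * g * Q ^ (a + b) by ring,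
    qCoeff_mul_pow hQ.1 (degree_lt_degree (natDegree_mul_divByMonic_lt hQ.1 hfQ hgQ)),
    if_neg hk] at h ⊢
  split_ifs at h ⊢ with hk1
  · have hlt := hQ.map_mul_lt_map_mul_divByMonic hν hf hg hfQ hgQ h
    rw [hν.map_mul _ _ hQ0 h, hν.map_mul f g hf hg] at hlt
    rw [hk1, hν.map_mul_pow h hQ0, hν.map_mul_pow hf hQ0, hν.map_mul_pow hg hQ0]
    push_cast
    linarith
  · exact absurd rfl h

end IsKeyPol

section Truncation

variable {K : Type*} [Field K] {Γ : Type*} [Field Γ] [LinearOrder Γ] [IsStrictOrderedRing Γ]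
  {ν : K[X] → Γ} {Q f g : K[X]}

theorem truncVal_le (hQ : Q.Monic) (hQd : 1 ≤ Q.natDegree) {i : ℕ} (h : qCoeff Q f i ≠ 0) :
    truncVal ν Q f ≤ ν (qCoeff Q f i * Q ^ i) := by
  have hi : i ∈ (Finset.range (f.natDegree + 1)).filter fun i => qCoeff Q f i ≠ 0 :=
    Finset.mem_filter.mpr
      ⟨Finset.mem_range.mpr (Nat.lt_succ_of_le (le_natDegree_of_qCoeff_ne_zero hQ hQd h)), h⟩
  rw [truncVal, dif_pos ⟨i, hi⟩]
  exact Finset.inf'_le _ hi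

theorem Sset_nonempty (hQ : Q.Monic) (hQd : 1 ≤ Q.natDegree) (hf : f ≠ 0) :
    (Sset ν Q f).Nonempty := by
  have hne : ((Finset.range (f.natDegree + 1)).filter fun i => qCoeff Q f i ≠ 0).Nonempty := by
    by_contra! hemp
    refine hf ((sum_qCoeff_mul_pow hQ hQd f).symm.trans (Finset.sum_eq_zero fun i hi => ?_))
    by_contra hne
    exact (Finset.filter_eq_empty_iff.mp hemp hi) (left_ne_zero_of_mul hne)
  obtain ⟨i, hi, hieq⟩ := Finset.exists_mem_eq_inf' hne fun i => ν (qCoeff Q f i * Q ^ i)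
  exact ⟨i, (Finset.mem_filter.mp hi).2, by rw [truncVal, dif_pos hne, hieq]⟩

theorem le_truncVal (hQ : Q.Monic) (hQd : 1 ≤ Q.natDegree) (hf : f ≠ 0) {c : Γ}
    (h : ∀ i, qCoeff Q f i ≠ 0 → c ≤ ν (qCoeff Q f i * Q ^ i)) :
    c ≤ truncVal ν Q f := by
  obtain ⟨i, hi, hieq⟩ := Sset_nonempty (ν := ν) hQ hQd hf
  exact hieq ▸ h i hi

theorem truncVal_lt_of_lt_sInf_Sset (hQ : Q.Monic) (hQd : 1 ≤ Q.natDegree) {a : ℕ}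
    (ha : a < sInf (Sset ν Q f)) (h : qCoeff Q f a ≠ 0) :
    truncVal ν Q f < ν (qCoeff Q f a * Q ^ a) :=
  (truncVal_le hQ hQd h).lt_of_ne fun heq =>
    (Nat.sInf_le (show a ∈ Sset ν Q f from ⟨h, heq.symm⟩)).not_gt ha

theorem min_truncVal_le_truncVal_add (hν : IsVal ν) (hQ : Q.Monic) (hQd : 1 ≤ Q.natDegree)
    (hfg : f + g ≠ 0) : min (truncVal ν Q f) (truncVal ν Q g) ≤ truncVal ν Q (f + g) := by
  refine le_truncVal hQ hQd hfg fun i hi => ?_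
  rw [qCoeff_add hQ] at hi ⊢
  rw [add_mul]
  exact hν.le_map_add
    (fun h => (min_le_left _ _).trans (truncVal_le hQ hQd (left_ne_zero_of_mul h)))
    (fun h => (min_le_right _ _).trans (truncVal_le hQ hQd (left_ne_zero_of_mul h)))
    (by rw [← add_mul]; exact mul_ne_zero hi (pow_ne_zero i hQ.ne_zero))

theorem IsKeyPol.truncVal_add_le_map_qCoeff (hν : IsVal ν) (hQ : IsKeyPol ν Q) {a b k : ℕ}
    (h : qCoeff Q (qCoeff Q f a * Q ^ a * (qCoeff Q g b * Q ^ b)) k * Q ^ k ≠ 0) :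
    truncVal ν Q f + truncVal ν Q g ≤
        ν (qCoeff Q (qCoeff Q f a * Q ^ a * (qCoeff Q g b * Q ^ b)) k * Q ^ k) ∧
      (k ≠ a + b ∨ a < sInf (Sset ν Q f) ∨ b < sInf (Sset ν Q g) →
        truncVal ν Q f + truncVal ν Q g <
          ν (qCoeff Q (qCoeff Q f a * Q ^ a * (qCoeff Q g b * Q ^ b)) k * Q ^ k)) := by
  have hQm := hQ.1
  have hQd := hQ.2.1
  have hfa : qCoeff Q f a ≠ 0 := fun h0 => h (by simp [h0])
  have hgb : qCoeff Q g b ≠ 0 := fun h0 => h (by simp [h0])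
  have hfv := truncVal_le (ν := ν) hQm hQd hfa
  have hgv := truncVal_le (ν := ν) hQm hQd hgb
  have hdeg := natDegree_qCoeff_lt hQm hQd
  rcases eq_or_ne k (a + b) with rfl | hk
  · have hv := (hQ.map_qCoeff_mul_pow_mul_mul_pow_add hν hfa hgb (hdeg f a) (hdeg g b) a b).2
    refine ⟨by linarith, fun hlt => ?_⟩
    rcases hlt with hk | ha | hb
    · exact absurd rfl hk
    · linarith [truncVal_lt_of_lt_sInf_Sset (ν := ν) hQm hQd ha hfa]
    · linarith [truncVal_lt_of_lt_sInf_Sset (ν := ν) hQm hQd hb hgb]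
  · have := hQ.lt_map_qCoeff_mul_pow_mul_mul_pow hν hfa hgb (hdeg f a) (hdeg g b) hk
      (left_ne_zero_of_mul h)
    exact ⟨by linarith, fun _ => by linarith⟩

theorem IsKeyPol.truncVal_mul (hν : IsVal ν) (hQ : IsKeyPol ν Q) (hf : f ≠ 0) (hg : g ≠ 0) :
    truncVal ν Q (f * g) = truncVal ν Q f + truncVal ν Q g := by
  have hQm := hQ.1
  have hQd := hQ.2.1
  set s := Finset.range (f.natDegree + 1) ×ˢ Finset.range (g.natDegree + 1)
  set T : ℕ → ℕ × ℕ → K[X] := fun k p =>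
    qCoeff Q (qCoeff Q f p.1 * Q ^ p.1 * (qCoeff Q g p.2 * Q ^ p.2)) k * Q ^ k
  have hexp (k : ℕ) : qCoeff Q (f * g) k * Q ^ k = ∑ p ∈ s, T k p := by
    conv_lhs => rw [← sum_qCoeff_mul_pow hQm hQd f, ← sum_qCoeff_mul_pow hQm hQd g,
      Finset.sum_mul_sum, ← Finset.sum_product', qCoeff_sum hQm, Finset.sum_mul]
  obtain ⟨hi, hiv⟩ := Nat.sInf_mem (Sset_nonempty (ν := ν) hQm hQd hf)
  obtain ⟨hj, hjv⟩ := Nat.sInf_mem (Sset_nonempty (ν := ν) hQm hQd hg)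
  set i := sInf (Sset ν Q f)
  set j := sInf (Sset ν Q g)
  have hdeg := natDegree_qCoeff_lt hQm hQd
  obtain ⟨hT, hTv⟩ := hQ.map_qCoeff_mul_pow_mul_mul_pow_add hν hi hj (hdeg f i) (hdeg g j) i j
  have hTv' : ν (T (i + j) (i, j)) = truncVal ν Q f + truncVal ν Q g := by
    rw [← hiv, ← hjv]
    exact hTv
  have hij : (i, j) ∈ s := Finset.mem_product.mpr
    ⟨Finset.mem_range.mpr (Nat.lt_succ_of_le (le_natDegree_of_qCoeff_ne_zero hQm hQd hi)),
      Finset.mem_range.mpr (Nat.lt_succ_of_le (le_natDegree_of_qCoeff_ne_zero hQm hQd hj))⟩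
  obtain ⟨hne, hv⟩ := hν.map_sum_eq_of_lt hij hT fun p _ hp h => hTv'.trans_lt
    ((hQ.truncVal_add_le_map_qCoeff hν h).2 (by
      rcases p with ⟨a, b⟩
      simp only [ne_eq, Prod.mk.injEq] at hp
      omega))
  rw [← hexp] at hne hv
  refine le_antisymm ?_ (le_truncVal hQm hQd (mul_ne_zero hf hg) fun k hk => ?_)
  · rw [← hTv', ← hv]
    exact truncVal_le hQm hQd (left_ne_zero_of_mul hne)
  · rw [hexp]
    exact hν.le_map_sum (fun p _ h => (hQ.truncVal_add_le_map_qCoeff hν h).1)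
      (hexp k ▸ mul_ne_zero hk (pow_ne_zero k hQm.ne_zero))

end Truncation

variable {K : Type*} [Field K] {Γ : Type*} [Field Γ] [LinearOrder Γ] [IsStrictOrderedRing Γ]

/-- If `Q` is a key polynomial, then the truncation `ν_Q` is a valuation:
it is multiplicative and satisfies the ultrametric inequality. -/
theorem trunc_isValuation (ν : Polynomial K → Γ) (hν : IsVal ν)
    (Q : Polynomial K) (hQ : IsKeyPol ν Q) :
    (∀ f g : Polynomial K, f ≠ 0 → g ≠ 0 →
      truncVal ν Q (f * g) = truncVal ν Q f + truncVal ν Q g) ∧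
    (∀ f g : Polynomial K, f ≠ 0 → g ≠ 0 → f + g ≠ 0 →
      min (truncVal ν Q f) (truncVal ν Q g) ≤ truncVal ν Q (f + g)) :=
  ⟨fun _ _ hf hg => hQ.truncVal_mul hν hf hg,
    fun _ _ _ _ hfg => min_truncVal_le_truncVal_add hν hQ.1 hQ.2.1 hfg⟩
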